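/- Over an algebraically closed field k of characteristic ≠ 2, the singular locus of the hypersurface Z(P₃) ⊂ A⁶ of non-semiregular ternary quadratic forms, where P₃ = 4ζ₁ζ₂ζ₃ + ζ₁₂ζ₁₃ζ₂₃ − (ζ₁ζ₂₃² + ζ₂ζ₁₃² + ζ₃ζ₁₂²), consists exactly of those points at which all partial derivatives of P₃ vanish, and this set equals the set of quadratic forms that are squares of linear forms. -/

import Mathlib

/-!
`2 P₃` is the determinant of the polar matrix `S` of `q`, so the partial derivatives of `P₃` are
the cofactors of `S`, i.e. up to sign its `2 × 2` minors; each of them passes through a diagonal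
entry, as any two pairs of indices in `Fin 3` meet. If these minors vanish then
`S = v vᵀ`: when some `S i i = s²` is nonzero take `v = (row i of S) / s`, and otherwise `S = 0`.
Over a field with a square root `t` of `2 ≠ 0`, `S = 2 w wᵀ` (with `w = v / t`) says exactly that
`q = (w ⬝ x)²`, and every `2 × 2` minor of a rank-one matrix vanishes.
-/

noncomputable section

open MvPolynomial

/-- The polynomial `P₃` whose vanishing defines non-semiregular ternary forms;
variables `0,1,2 ↦ ζ₁,ζ₂,ζ₃` and `3,4,5 ↦ ζ₁₂,ζ₁₃,ζ₂₃`. -/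
def P₃ (k : Type*) [CommRing k] : MvPolynomial (Fin 6) k :=
  4 * X 0 * X 1 * X 2 + X 3 * X 4 * X 5
    - (X 0 * X 5 ^ 2 + X 1 * X 4 ^ 2 + X 2 * X 3 ^ 2)

namespace Matrix

variable {m n K : Type*}

theorem vecMulVec_mul_sub_mul_eq_zero [CommRing K] (u : m → K) (v : n → K) (i i' : m) (j j' : n) :
    vecMulVec u v i j * vecMulVec u v i' j' - vecMulVec u v i j' * vecMulVec u v i' j = 0 := by
  simp only [vecMulVec_apply]; ring

theorem IsSymm.mul_eq_mul_of_minors_eq_zero [CommRing K] {A : Matrix n n K} (hA : A.IsSymm)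
    (h : ∀ i j i' j', A i j * A i' j' - A i j' * A i' j = 0) (i j l : n) :
    A i i * A j l = A i j * A i l := by
  have hminor := h i i j l
  rw [hA.apply i j] at hminor
  linear_combination hminor

theorem exists_eq_vecMulVec_self [Field K] [IsAlgClosed K] {A : Matrix n n K}
    (h : ∀ i j l, A i i * A j l = A i j * A i l) : ∃ v : n → K, A = vecMulVec v v := by
  by_cases hdiag : ∃ i, A i i ≠ 0
  · obtain ⟨i, hi⟩ := hdiag
    obtain ⟨s, hs⟩ := IsAlgClosed.exists_eq_mul_self (A i i)
    have hs0 : s ≠ 0 := by rintro rfl; simp_all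
    refine ⟨fun j => A i j / s, ?_⟩
    ext j l
    rw [vecMulVec_apply, div_mul_div_comm, eq_div_iff (mul_ne_zero hs0 hs0), ← hs, mul_comm]
    exact h i j l
  · push Not at hdiag
    refine ⟨0, ?_⟩
    ext j l
    simpa [hdiag] using (h j l l).symm

end Matrix

open Matrix

section TernaryForm

variable {k : Type*} [Field k]

def polarMatrix (lam : Fin 6 → k) : Matrix (Fin 3) (Fin 3) k :=
  !![2 * lam 0, lam 3, lam 4;
     lam 3, 2 * lam 1, lam 5;
     lam 4, lam 5, 2 * lam 2]

def ternaryForm (lam : Fin 6 → k) (x : Fin 3 → k) : k :=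
  lam 0 * x 0 ^ 2 + lam 1 * x 1 ^ 2 + lam 2 * x 2 ^ 2
    + lam 3 * x 0 * x 1 + lam 4 * x 0 * x 2 + lam 5 * x 1 * x 2

def sqCoeffs (v : Fin 3 → k) : Fin 6 → k :=
  ![v 0 ^ 2, v 1 ^ 2, v 2 ^ 2, 2 * v 0 * v 1, 2 * v 0 * v 2, 2 * v 1 * v 2]

theorem polarMatrix_isSymm (lam : Fin 6 → k) : (polarMatrix lam).IsSymm := by
  ext i j; fin_cases i <;> fin_cases j <;> rfl

theorem polarMatrix_injective (h2 : (2 : k) ≠ 0) : Function.Injective (polarMatrix (k := k)) := by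
  intro lam mu h
  have hij (i j) := congrFun₂ h i j
  ext i; fin_cases i
  · simpa [polarMatrix, h2] using hij 0 0
  · simpa [polarMatrix, h2] using hij 1 1
  · simpa [polarMatrix, h2] using hij 2 2
  · simpa [polarMatrix] using hij 0 1
  · simpa [polarMatrix] using hij 0 2
  · simpa [polarMatrix] using hij 1 2

theorem polarMatrix_sqCoeffs (v : Fin 3 → k) :
    polarMatrix (sqCoeffs v) = vecMulVec ((2 : k) • v) v := by
  ext i j; fin_cases i <;> fin_cases j <;> simp [polarMatrix, sqCoeffs, vecMulVec_apply] <;> ring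

theorem ternaryForm_eq_sq_iff (lam : Fin 6 → k) (a b c : k) :
    (∀ x, ternaryForm lam x = (a * x 0 + b * x 1 + c * x 2) ^ 2) ↔ lam = sqCoeffs ![a, b, c] := by
  constructor
  · intro hq
    have q0 := hq ![1, 0, 0]
    have q1 := hq ![0, 1, 0]
    have q2 := hq ![0, 0, 1]
    have q3 := hq ![1, 1, 0]
    have q4 := hq ![1, 0, 1]
    have q5 := hq ![0, 1, 1]
    simp only [ternaryForm, cons_val_zero, cons_val_one, cons_val] at q0 q1 q2 q3 q4 q5
    ext i
    fin_cases i <;>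
      simp only [sqCoeffs, Fin.zero_eta, Fin.mk_one, Fin.reduceFinMk, cons_val_zero, cons_val_one,
        cons_val]
    · linear_combination q0
    · linear_combination q1
    · linear_combination q2
    · linear_combination q3 - q0 - q1
    · linear_combination q4 - q0 - q2
    · linear_combination q5 - q1 - q2
  · rintro rfl x
    simp [ternaryForm, sqCoeffs]; ring

theorem polarMatrix_minor_eq_zero_of_ternaryForm_eq_sq {lam : Fin 6 → k}
    (hq : ∃ a b c : k, ∀ x, ternaryForm lam x = (a * x 0 + b * x 1 + c * x 2) ^ 2) (i j i' j') :
    polarMatrix lam i j * polarMatrix lam i' j' - polarMatrix lam i j' * polarMatrix lam i' j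
      = 0 := by
  obtain ⟨a, b, c, hq⟩ := hq
  rw [(ternaryForm_eq_sq_iff lam a b c).1 hq, polarMatrix_sqCoeffs]
  exact vecMulVec_mul_sub_mul_eq_zero _ _ i i' j j'

theorem exists_ternaryForm_eq_sq_of_polarMatrix [IsAlgClosed k] (h2 : (2 : k) ≠ 0)
    {lam : Fin 6 → k}
    (h : ∀ i j l, polarMatrix lam i i * polarMatrix lam j l
      = polarMatrix lam i j * polarMatrix lam i l) :
    ∃ a b c : k, ∀ x, ternaryForm lam x = (a * x 0 + b * x 1 + c * x 2) ^ 2 := by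
  obtain ⟨v, hv⟩ := exists_eq_vecMulVec_self h
  obtain ⟨t, ht⟩ := IsAlgClosed.exists_eq_mul_self (2 : k)
  have ht0 : t ≠ 0 := by rintro rfl; simp_all
  set w := t⁻¹ • v
  have hw : ![w 0, w 1, w 2] = w := by ext i; fin_cases i <;> rfl
  refine ⟨w 0, w 1, w 2, (ternaryForm_eq_sq_iff lam _ _ _).2 (polarMatrix_injective h2 ?_)⟩
  rw [polarMatrix_sqCoeffs, hv, hw]
  ext i j
  simp only [w, vecMulVec_apply, Pi.smul_apply, smul_eq_mul]
  rw [ht]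
  field_simp

theorem eval_pderiv_P₃ (lam : Fin 6 → k) :
    (fun i => eval lam (pderiv i (P₃ k))) =
      ![4 * lam 1 * lam 2 - lam 5 ^ 2, 4 * lam 0 * lam 2 - lam 4 ^ 2, 4 * lam 0 * lam 1 - lam 3 ^ 2,
        lam 4 * lam 5 - 2 * lam 2 * lam 3, lam 3 * lam 5 - 2 * lam 1 * lam 4,
        lam 3 * lam 4 - 2 * lam 0 * lam 5] := by
  ext i; fin_cases i <;> simp [P₃, ← map_ofNat C] <;> ring

theorem eval_pderiv_P₃_eq_zero_iff (lam : Fin 6 → k) :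
    (∀ i : Fin 6, eval lam (pderiv i (P₃ k)) = 0) ↔
      ∀ i j l, polarMatrix lam i i * polarMatrix lam j l
        = polarMatrix lam i j * polarMatrix lam i l := by
  have hP (i) : eval lam (pderiv i (P₃ k)) = _ := congrFun (eval_pderiv_P₃ lam) i
  simp [hP, Fin.forall_fin_succ, polarMatrix]
  grind

end TernaryForm

/-- Over an algebraically closed field of characteristic ≠ 2, all six partial derivatives of
`P₃` vanish at a point (λᵢ, λᵢⱼ) iff the corresponding ternary quadratic form is the square
of a linear form, iff all 2×2 minors of the symmetric matrix of its bilinear form vanish. -/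
theorem singular_locus_P₃ {k : Type*} [Field k] [IsAlgClosed k] (h2 : (2 : k) ≠ 0)
    (lam : Fin 6 → k) (S : Matrix (Fin 3) (Fin 3) k)
    (hS : S = !![2 * lam 0, lam 3, lam 4;
                 lam 3, 2 * lam 1, lam 5;
                 lam 4, lam 5, 2 * lam 2]) :
    ((∀ i : Fin 6, eval lam (pderiv i (P₃ k)) = 0)
      ↔ ∃ a b c : k, ∀ x : Fin 3 → k,
          lam 0 * x 0 ^ 2 + lam 1 * x 1 ^ 2 + lam 2 * x 2 ^ 2
            + lam 3 * x 0 * x 1 + lam 4 * x 0 * x 2 + lam 5 * x 1 * x 2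
          = (a * x 0 + b * x 1 + c * x 2) ^ 2)
    ∧ ((∃ a b c : k, ∀ x : Fin 3 → k,
          lam 0 * x 0 ^ 2 + lam 1 * x 1 ^ 2 + lam 2 * x 2 ^ 2
            + lam 3 * x 0 * x 1 + lam 4 * x 0 * x 2 + lam 5 * x 1 * x 2
          = (a * x 0 + b * x 1 + c * x 2) ^ 2)
      ↔ ∀ i j i' j' : Fin 3, S i j * S i' j' - S i j' * S i' j = 0) := by
  obtain rfl : S = polarMatrix lam := hS
  have minors_of_sq := polarMatrix_minor_eq_zero_of_ternaryForm_eq_sq (lam := lam)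
  have pivots_of_minors := (polarMatrix_isSymm lam).mul_eq_mul_of_minors_eq_zero
  rw [eval_pderiv_P₃_eq_zero_iff]
  exact ⟨⟨exists_ternaryForm_eq_sq_of_polarMatrix h2, fun hq => pivots_of_minors (minors_of_sq hq)⟩,
    ⟨minors_of_sq, fun h => exists_ternaryForm_eq_sq_of_polarMatrix h2 (pivots_of_minors h)⟩⟩
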